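/- Let n ≥ 2 be an integer and let f₁(r) = −1 + Σ_{m=1}^∞ [m·(2m−2)! / (2^{3m−1}·(m!)²·∏_{j=0}^{m−1}(n+2j))]·r^{2m}. Then the integral ∫₀^∞ rⁿ·f₁(r)²·e^{−r²/4} dr diverges (equals +∞). -/

import Mathlib

/-! With `x = r²/4`, the `m`-th term of `f₁` is `hplaneCoef n m · 4^m · x^m`. The bounds
`4^k / (2k+1) ≤ C(2k, k) ≤ 4^k` and `2^m m! ≤ ∏_{j<m} (n + 2j) ≤ 2^m (n+m)!` squeeze it between
`x^m / (4 (n+m+2)!)` and `x^m / m!`. The upper bound makes the series converge; the lower bound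
sums to an exponential tail, so `f₁(r) ≳ eˣ / x^(n+2)`. Hence `f₁(r) e^{-r²/8} → ∞`, and the
integrand `rⁿ (f₁(r) e^{-r²/8})²` is eventually at least `1`. -/

open MeasureTheory

noncomputable def hplaneCoef (n m : ℕ) : ℝ :=
  ((m : ℝ) * (Nat.factorial (2*m - 2) : ℝ)) /
    ((2:ℝ)^(3*m - 1) * ((Nat.factorial m : ℝ))^2 *
      ∏ j ∈ Finset.range m, ((n : ℝ) + 2*(j : ℝ)))

noncomputable def fOne (n : ℕ) (r : ℝ) : ℝ :=
  -1 + ∑' m : ℕ, hplaneCoef n (m+1) * r^(2*(m+1))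

open Filter Real Finset Nat Set Topology

lemma prod_add_two_mul_le (n m : ℕ) : ∏ j ∈ range m, (n + 2 * j) ≤ 2 ^ m * (n + m)! := by
  induction m with
  | zero => simpa using Nat.succ_le_of_lt n.factorial_pos
  | succ m ih =>
    rw [prod_range_succ, ← add_assoc, factorial_succ, pow_succ]
    calc (∏ j ∈ range m, (n + 2 * j)) * (n + 2 * m)
        ≤ 2 ^ m * (n + m)! * (2 * (n + m + 1)) := by gcongr; omega
      _ = 2 ^ m * 2 * ((n + m + 1) * (n + m)!) := by ring

lemma two_pow_mul_factorial_le_prod {n : ℕ} (hn : 2 ≤ n) (m : ℕ) :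
    2 ^ m * m ! ≤ ∏ j ∈ range m, (n + 2 * j) := by
  induction m with
  | zero => simp
  | succ m ih =>
    rw [prod_range_succ, factorial_succ, pow_succ]
    calc 2 ^ m * 2 * ((m + 1) * m !) = 2 ^ m * m ! * (2 * (m + 1)) := by ring
      _ ≤ (∏ j ∈ range m, (n + 2 * j)) * (n + 2 * m) := by gcongr; omega

lemma hplaneCoef_succ (n k : ℕ) :
    hplaneCoef n (k + 1) = centralBinom k /
      (2 ^ (3 * k + 2) * (k + 1) * ((∏ j ∈ range (k + 1), (n + 2 * j) : ℕ) : ℝ)) := by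
  have hfac : ((2 * k)! : ℝ) = centralBinom k * k ! * k ! := by
    have h := (2 * k).choose_mul_factorial_mul_factorial (k := k) (by omega)
    rw [show 2 * k - k = k by omega, ← centralBinom_eq_two_mul_choose] at h
    exact_mod_cast h.symm
  rw [hplaneCoef, show 2 * (k + 1) - 2 = 2 * k by omega, show 3 * (k + 1) - 1 = 3 * k + 2 by omega,
    hfac, factorial_succ]
  push_cast
  have : (k ! : ℝ) ≠ 0 := by positivity
  field_simp

lemma hplaneCoef_nonneg (n m : ℕ) : 0 ≤ hplaneCoef n m := by
  unfold hplaneCoef; positivity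

lemma hplaneCoef_succ_mul_four_pow_le {n : ℕ} (hn : 2 ≤ n) (k : ℕ) :
    hplaneCoef n (k + 1) * 4 ^ (k + 1) ≤ 1 / (k + 1)! := by
  have hprod := two_pow_mul_factorial_le_prod hn (k + 1)
  have hprod_pos : 0 < ∏ j ∈ range (k + 1), (n + 2 * j) := hprod.trans_lt' (by positivity)
  have key : centralBinom k * 4 ^ (k + 1) * (k + 1)! ≤
      2 ^ (3 * k + 2) * (k + 1) * ∏ j ∈ range (k + 1), (n + 2 * j) :=
    calc centralBinom k * 4 ^ (k + 1) * (k + 1)!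
        ≤ 4 ^ k * 4 ^ (k + 1) * (k + 1)! := by gcongr; exact centralBinom_le_four_pow k
      _ = 2 ^ (4 * k + 2) * (k + 1)! := by rw [show 4 = 2 ^ 2 by rfl, ← pow_mul, ← pow_mul]; ring
      _ ≤ 2 ^ (4 * k + 3) * ((k + 1) * (k + 1)!) :=
          Nat.mul_le_mul (Nat.pow_le_pow_right two_pos (by omega))
            (Nat.le_mul_of_pos_left _ k.succ_pos)
      _ = 2 ^ (3 * k + 2) * (k + 1) * (2 ^ (k + 1) * (k + 1)!) := by ring
      _ ≤ 2 ^ (3 * k + 2) * (k + 1) * ∏ j ∈ range (k + 1), (n + 2 * j) := by gcongr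
  rw [hplaneCoef_succ, div_mul_eq_mul_div, div_le_div_iff₀ (by positivity) (by positivity), one_mul]
  exact_mod_cast key

lemma one_div_le_hplaneCoef_succ_mul_four_pow {n : ℕ} (hn : 1 ≤ n) (k : ℕ) :
    1 / (4 * (n + k + 3)! : ℝ) ≤ hplaneCoef n (k + 1) * 4 ^ (k + 1) := by
  have hprod_pos : 0 < ∏ j ∈ range (k + 1), (n + 2 * j) := prod_pos fun j _ => by omega
  have hfac : (2 * k + 1) * (k + 1) * (n + k + 1)! ≤ 2 * (n + k + 3)! := by
    rw [factorial_succ (n + k + 2), factorial_succ (n + k + 1), ← mul_assoc, ← mul_assoc]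
    gcongr <;> omega
  have hbinom := four_pow_le_two_mul_add_one_mul_central_binom k
  rw [← centralBinom_eq_two_mul_choose] at hbinom
  have key : (2 * k + 1) * (2 ^ (3 * k + 2) * (k + 1) * ∏ j ∈ range (k + 1), (n + 2 * j)) ≤
      (2 * k + 1) * (centralBinom k * 4 ^ (k + 1) * (4 * (n + k + 3)!)) :=
    calc (2 * k + 1) * (2 ^ (3 * k + 2) * (k + 1) * ∏ j ∈ range (k + 1), (n + 2 * j))
        ≤ (2 * k + 1) * (2 ^ (3 * k + 2) * (k + 1) * (2 ^ (k + 1) * (n + k + 1)!)) := by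
          gcongr; exact prod_add_two_mul_le n (k + 1)
      _ = 2 ^ (4 * k + 3) * ((2 * k + 1) * (k + 1) * (n + k + 1)!) := by ring
      _ ≤ 2 ^ (4 * k + 3) * (2 * (n + k + 3)!) := by gcongr
      _ = 4 ^ k * 4 ^ (k + 1) * (4 * (n + k + 3)!) := by
          rw [show 4 = 2 ^ 2 by rfl, ← pow_mul, ← pow_mul]; ring
      _ ≤ (2 * k + 1) * centralBinom k * 4 ^ (k + 1) * (4 * (n + k + 3)!) := by gcongr
      _ = (2 * k + 1) * (centralBinom k * 4 ^ (k + 1) * (4 * (n + k + 3)!)) := by ring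
  rw [hplaneCoef_succ, div_mul_eq_mul_div, div_le_div_iff₀ (by positivity) (by positivity), one_mul]
  exact_mod_cast Nat.le_of_mul_le_mul_left key (by omega)

lemma summable_hplaneCoef_mul_pow {n : ℕ} (hn : 2 ≤ n) (r : ℝ) :
    Summable fun m => hplaneCoef n (m + 1) * r ^ (2 * (m + 1)) := by
  have hexp := (summable_nat_add_iff 1).2 (Real.summable_pow_div_factorial (r ^ 2 / 4))
  have hnonneg (m : ℕ) : 0 ≤ hplaneCoef n (m + 1) * r ^ (2 * (m + 1)) :=
    mul_nonneg (hplaneCoef_nonneg n (m + 1)) (by rw [pow_mul]; positivity)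
  refine hexp.of_nonneg_of_le hnonneg fun m => ?_
  calc hplaneCoef n (m + 1) * r ^ (2 * (m + 1))
      = hplaneCoef n (m + 1) * 4 ^ (m + 1) * (r ^ 2 / 4) ^ (m + 1) := by
        rw [pow_mul, div_pow]; field_simp
    _ ≤ 1 / (m + 1)! * (r ^ 2 / 4) ^ (m + 1) := by
        gcongr; exact hplaneCoef_succ_mul_four_pow_le hn m
    _ = (r ^ 2 / 4) ^ (m + 1) / (m + 1)! := by ring

lemma tsum_pow_div_factorial_add (x : ℝ) (N : ℕ) :
    ∑' j, x ^ (j + N) / (j + N)! = exp x - ∑ j ∈ range N, x ^ j / j ! := by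
  rw [eq_sub_iff_add_eq', (Real.summable_pow_div_factorial x).sum_add_tsum_nat_add N,
    exp_eq_exp_ℝ]
  exact (NormedSpace.expSeries_div_hasSum_exp x).tsum_eq

lemma sum_range_pow_div_factorial_le {x : ℝ} (hx : 1 ≤ x) (N : ℕ) :
    ∑ j ∈ range (N + 1), x ^ j / j ! ≤ (N + 1) * x ^ N :=
  calc ∑ j ∈ range (N + 1), x ^ j / j ! ≤ ∑ _j ∈ range (N + 1), x ^ N := by
        refine sum_le_sum fun j hj => ?_
        calc x ^ j / j ! ≤ x ^ j :=
              div_le_self (by positivity) (by exact_mod_cast j.factorial_pos)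
          _ ≤ x ^ N := pow_le_pow_right₀ hx (by simpa [Nat.lt_succ_iff] using hj)
    _ = (N + 1) * x ^ N := by simp

lemma exp_div_sub_le_fOne {n : ℕ} (hn : 2 ≤ n) {x r : ℝ} (hx : 1 ≤ x) (hr : r ^ 2 = 4 * x) :
    exp x / (4 * x ^ (n + 2)) - (n + 7) / 4 ≤ fOne n r := by
  have hx0 : 0 < x := by linarith
  have hterm : ∀ m : ℕ, x ^ (m + (n + 3)) / (m + (n + 3))! / (4 * x ^ (n + 2)) ≤
      hplaneCoef n (m + 1) * r ^ (2 * (m + 1)) := fun m =>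
    calc x ^ (m + (n + 3)) / (m + (n + 3))! / (4 * x ^ (n + 2))
        = 1 / (4 * (n + m + 3)! : ℝ) * x ^ (m + 1) := by
          rw [show m + (n + 3) = (m + 1) + (n + 2) by ring, pow_add,
            show m + 1 + (n + 2) = n + m + 3 by ring]
          field_simp
      _ ≤ hplaneCoef n (m + 1) * 4 ^ (m + 1) * x ^ (m + 1) := by
          gcongr; exact one_div_le_hplaneCoef_succ_mul_four_pow (by omega) m
      _ = hplaneCoef n (m + 1) * r ^ (2 * (m + 1)) := by rw [pow_mul, hr, mul_pow, mul_assoc]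
  have htail := (summable_nat_add_iff (n + 3)).2 (Real.summable_pow_div_factorial x)
  have hsum := sum_range_pow_div_factorial_le hx (n + 2)
  calc exp x / (4 * x ^ (n + 2)) - (n + 7) / 4
      ≤ -1 + (exp x - ∑ j ∈ range (n + 3), x ^ j / j !) / (4 * x ^ (n + 2)) := by
        have hpartial :
            (∑ j ∈ range (n + 3), x ^ j / j !) / (4 * x ^ (n + 2)) ≤ (n + 3) / 4 := by
          rw [div_le_div_iff₀ (by positivity) (by norm_num)]
          push_cast at hsum
          nlinarith
        rw [sub_div]
        linarith
    _ = -1 + ∑' m, x ^ (m + (n + 3)) / (m + (n + 3))! / (4 * x ^ (n + 2)) := by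
        rw [tsum_div_const, tsum_pow_div_factorial_add]
    _ ≤ fOne n r := by
        unfold fOne
        gcongr -1 + ?_
        exact (htail.div_const _).tsum_le_tsum hterm (summable_hplaneCoef_mul_pow hn r)

lemma tendsto_exp_div_sub_mul_exp_neg_half (k : ℕ) (c : ℝ) :
    Tendsto (fun x => (exp x / (4 * x ^ k) - c) * exp (-x / 2)) atTop atTop := by
  have hmain : Tendsto (fun x : ℝ => exp (x / 2) / (4 * x ^ k)) atTop atTop := by
    have := (tendsto_exp_mul_div_rpow_atTop k (1 / 2) one_half_pos).const_mul_atTop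
      (show (0 : ℝ) < 1 / 4 by norm_num)
    refine this.congr fun x => ?_
    rw [rpow_natCast]
    ring_nf
  have hdecay : Tendsto (fun x : ℝ => -c * exp (-x / 2)) atTop (𝓝 0) := by
    have : Tendsto (fun x : ℝ => -x / 2) atTop atBot :=
      (tendsto_neg_atTop_atBot.atBot_div_const two_pos)
    simpa using (tendsto_exp_atBot.comp this).const_mul (-c)
  refine (hmain.atTop_add hdecay).congr fun x => ?_
  have : exp x * exp (-x / 2) = exp (x / 2) := by rw [← exp_add]; ring_nf
  rw [sub_mul, div_mul_eq_mul_div, this]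
  ring

lemma eventually_one_le_fOne_mul_exp {n : ℕ} (hn : 2 ≤ n) :
    ∀ᶠ r in atTop, 1 ≤ fOne n r * exp (-r ^ 2 / 8) := by
  have hx : Tendsto (fun r : ℝ => r ^ 2 / 4) atTop atTop :=
    (tendsto_pow_atTop two_ne_zero).atTop_div_const (by norm_num)
  have hgrowth := tendsto_exp_div_sub_mul_exp_neg_half (n + 2) ((n + 7) / 4)
  filter_upwards [hx.eventually (hgrowth.eventually_ge_atTop 1),
    hx.eventually (eventually_ge_atTop 1)] with r hr hx1
  refine hr.trans ?_
  rw [show -(r ^ 2 / 4) / 2 = -r ^ 2 / 8 by ring]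
  gcongr
  exact exp_div_sub_le_fOne hn hx1 (by ring)

lemma setLIntegral_Ioi_ofReal_eq_top {f : ℝ → ℝ} {c : ℝ} (hc : 0 < c)
    (hf : ∀ᶠ x in atTop, c ≤ f x) (a : ℝ) : ∫⁻ x in Ioi a, ENNReal.ofReal (f x) = ⊤ := by
  obtain ⟨R, hR⟩ := eventually_atTop.1 hf
  refine top_le_iff.1 ?_
  calc ⊤ = ∫⁻ _ in Ioi (max a R), ENNReal.ofReal c := by
        rw [setLIntegral_const, Real.volume_Ioi, ENNReal.mul_top (by simpa using hc)]
    _ ≤ ∫⁻ x in Ioi (max a R), ENNReal.ofReal (f x) :=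
        setLIntegral_mono' measurableSet_Ioi fun x hx =>
          ENNReal.ofReal_le_ofReal (hR x (le_of_max_le_right hx.out.le))
    _ ≤ ∫⁻ x in Ioi a, ENNReal.ofReal (f x) :=
        lintegral_mono_set (Ioi_subset_Ioi (le_max_left a R))

/-- The integral `∫₀^∞ rⁿ f₁(r)² e^{−r²/4} dr` diverges. -/
theorem stmt18 (n : ℕ) (hn : 2 ≤ n) :
    ∫⁻ r in Set.Ioi (0:ℝ),
      ENNReal.ofReal (r^n * (fOne n r)^2 * Real.exp (-r^2/4)) = ⊤ := by
  refine setLIntegral_Ioi_ofReal_eq_top one_pos ?_ 0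
  filter_upwards [eventually_one_le_fOne_mul_exp hn, eventually_ge_atTop 1] with r hf hr
  calc 1 ≤ (fOne n r * exp (-r ^ 2 / 8)) ^ 2 := one_le_pow₀ hf
    _ = 1 * (fOne n r) ^ 2 * exp (-r ^ 2 / 4) := by
        rw [mul_pow, ← exp_nat_mul]; ring_nf
    _ ≤ r ^ n * (fOne n r) ^ 2 * exp (-r ^ 2 / 4) := by gcongr; exact one_le_pow₀ hr
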